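/- Let q = 2^h with h ≥ 2, and let a₁₃ ∈ F_q^*, a₁₁ ∈ F_q with Tr(a₁₁) = 1, a₃₃ = a₁₃². Let C = {(x, y) ∈ F_q² : a₁₁x² + a₁₃x + y + a₃₃ = 0} and Δ = {(x, a·x²) : x ∈ F_q^*, Tr(a) = 0}. Then Δ ∩ C = ∅. -/

import Mathlib

/-!
Dividing the equation of `C` by `x²` shows that a point `(x, a x²)` with `x ≠ 0` lies on `C`
exactly when `a = a₁₁ + b² + b` for `b = a₁₃ / x`. Since the Frobenius is an automorphism over
`F₂`, `Tr (b² + b) = 0`, so `Tr a = Tr a₁₁ = 1`, contradicting `Tr a = 0`.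
-/

theorem Algebra.trace_pow_card {K L : Type*} [Field K] [Fintype K] [Field L] [Algebra K L]
    [Algebra.IsAlgebraic K L] (x : L) :
    Algebra.trace K L (x ^ Fintype.card K) = Algebra.trace K L x :=
  Algebra.trace_eq_of_algEquiv (FiniteField.frobeniusAlgEquivOfAlgebraic K L) x

theorem Algebra.trace_pow_card_sub_self {K L : Type*} [Field K] [Fintype K] [Field L]
    [Algebra K L] [Algebra.IsAlgebraic K L] (x : L) :
    Algebra.trace K L (x ^ Fintype.card K - x) = 0 := by
  rw [map_sub, Algebra.trace_pow_card, sub_self]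

theorem stmt12_general {F : Type*} [Field F] [Fintype F] [Algebra (ZMod 2) F]
    (a11 a13 a33 : F) (htr : Algebra.trace (ZMod 2) F a11 = 1)
    (h33 : a33 = a13 ^ 2) :
    {p : F × F | ∃ x a : F, x ≠ 0 ∧ Algebra.trace (ZMod 2) F a = 0 ∧
        p = (x, a * x ^ 2)} ∩
      {p : F × F | a11 * p.1 ^ 2 + a13 * p.1 + p.2 + a33 = 0} = ∅ := by
  have : CharP F 2 := charP_of_injective_algebraMap' (ZMod 2) 2
  subst h33
  refine Set.eq_empty_iff_forall_notMem.2 ?_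
  rintro _ ⟨⟨x, a, hx, ha, rfl⟩, hC : a11 * x ^ 2 + a13 * x + a * x ^ 2 + a13 ^ 2 = 0⟩
  have ha_eq : a = a11 + ((a13 / x) ^ 2 - a13 / x) := by
    field_simp
    linear_combination hC - (a11 * x ^ 2 + a13 ^ 2) * CharTwo.two_eq_zero (R := F)
  have htr_zero := Algebra.trace_pow_card_sub_self (K := ZMod 2) (a13 / x)
  rw [ZMod.card] at htr_zero
  rw [ha_eq, map_add, htr, htr_zero, add_zero] at ha
  exact one_ne_zero ha

theorem stmt12 {F : Type*} [Field F] [Fintype F] [Algebra (ZMod 2) F]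
    {h : ℕ} (hh : 2 ≤ h) (hcard : Fintype.card F = 2 ^ h)
    (a11 a13 a33 : F) (h13 : a13 ≠ 0) (htr : Algebra.trace (ZMod 2) F a11 = 1)
    (h33 : a33 = a13 ^ 2) :
    {p : F × F | ∃ x a : F, x ≠ 0 ∧ Algebra.trace (ZMod 2) F a = 0 ∧
        p = (x, a * x ^ 2)} ∩
      {p : F × F | a11 * p.1 ^ 2 + a13 * p.1 + p.2 + a33 = 0} = ∅ :=
  stmt12_general a11 a13 a33 htr h33
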